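/- Let c ∈ B_r(ā) ⊂ ℓ¹_ν × ℓ¹_ν and let DF be the derivative of the Cauchy-Riemann map F whose only nonlinearity is the cubic term −λ(a₁∗a₁∗a₁). Then ‖[DF(c) − DF(ā)]h‖ ≤ 3|λ| · r · (r + 2‖ā₁‖_{1,ν}) · ‖h‖ for all h, where ‖·‖ is the max of the component ℓ¹_ν norms; in particular the Lipschitz bound Z₂ = 3|λ|‖A‖(1 + 2‖ā₁‖_{1,ν}) is valid for r ≤ 1. -/

import Mathlib

/-- Membership in `ℓ¹_ν`. -/
def memL1 (ν : ℝ) (a : ℕ → ℝ) : Prop := Summable (fun k : ℕ => |a k| * ν ^ k)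

/-- The weighted `ℓ¹_ν` norm `‖a‖ = |a₀| + 2∑_{k≥1}|a_k|ν^k`. -/
noncomputable def wnorm (ν : ℝ) (a : ℕ → ℝ) : ℝ :=
  |a 0| + 2 * ∑' k : ℕ, |a (k + 1)| * ν ^ (k + 1)

/-- Symmetrized discrete convolution. -/
noncomputable def conv (a b : ℕ → ℝ) (k : ℕ) : ℝ :=
  ∑' j : ℤ, a j.natAbs * b ((k : ℤ) - j).natAbs

/-!
Extend a sequence `a` evenly to `ℤ`, `j ↦ a |j|`. Then `‖a‖_{1,ν}` is the `ℓ¹` norm of this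
extension with weight `ν ^ |j|`, and `conv` is the ordinary convolution on `ℤ`. Since
`|k| ≤ |j| + |k - j|` and `ν ≥ 1`, the weight is submultiplicative, so a Cauchy product over `ℤ`
gives the Banach algebra estimate `‖a ∗ b‖ ≤ ‖a‖ ‖b‖`. Writing
`c₁ ∗ c₁ - ā₁ ∗ ā₁ = (c₁ - ā₁) ∗ (c₁ + ā₁)` and `‖c₁ + ā₁‖ ≤ ‖c₁ - ā₁‖ + 2‖ā₁‖ ≤ r + 2‖ā₁‖`,
two applications of that estimate bound the first component by `3|λ| r (r + 2‖ā₁‖) ‖h₁‖`.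
-/

noncomputable def normTerm (ν : ℝ) (a : ℕ → ℝ) (j : ℤ) : ℝ := |a j.natAbs| * ν ^ j.natAbs

theorem hasSum_prod_mul_sub {G : Type*} [AddCommGroup G] {f g : G → ℝ}
    (hf : Summable f) (hg : Summable g) :
    HasSum (fun p : G × G => f p.2 * g (p.1 - p.2)) ((∑' j, f j) * ∑' j, g j) := by
  let e : G × G ≃ G × G :=
    { toFun := fun p => (p.2, p.1 - p.2)
      invFun := fun q => (q.1 + q.2, q.1)
      left_inv := fun p => by simp
      right_inv := fun q => by simp }
  rw [tsum_mul_tsum_of_summable_norm hf.norm hg.norm]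
  exact e.hasSum_iff.mpr (summable_mul_of_summable_norm hf.norm hg.norm).hasSum

theorem hasSum_tsum_mul_sub {G : Type*} [AddCommGroup G] {f g : G → ℝ}
    (hf : Summable f) (hg : Summable g) :
    HasSum (fun k => ∑' j, f j * g (k - j)) ((∑' j, f j) * ∑' j, g j) :=
  have hprod := hasSum_prod_mul_sub hf hg
  hprod.prod_fiberwise fun k => (hprod.summable.prod_factor k).hasSum

section

variable {ν : ℝ} {a b c : ℕ → ℝ}

theorem normTerm_nonneg (hν : 0 ≤ ν) (a : ℕ → ℝ) (j : ℤ) : 0 ≤ normTerm ν a j :=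
  mul_nonneg (abs_nonneg _) (pow_nonneg hν _)

theorem memL1_iff_summable_normTerm : memL1 ν a ↔ Summable (normTerm ν a) := by
  unfold memL1
  refine ⟨fun ha => .of_nat_of_neg (by simpa [normTerm] using ha) (by simpa [normTerm] using ha),
    fun ha => ?_⟩
  simpa [normTerm, Function.comp_def] using ha.comp_injective Nat.cast_injective

theorem wnorm_eq_tsum_normTerm (ha : memL1 ν a) : wnorm ν a = ∑' j : ℤ, normTerm ν a j := by
  have hsucc : ∀ n : ℕ, ((n : ℤ) + 1).natAbs = n + 1 := fun n => by omega
  have hpos : Summable fun n : ℕ => normTerm ν a (n + 1) := by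
    simpa only [normTerm, hsucc] using (summable_nat_add_iff 1).mpr ha
  have hneg : Summable fun n : ℕ => normTerm ν a (-(n + 1)) := by
    simpa only [normTerm, Int.natAbs_neg] using hpos
  rw [tsum_of_add_one_of_neg_add_one hpos hneg]
  simp only [normTerm, Int.natAbs_neg, hsucc, wnorm, Int.natAbs_zero, pow_zero, mul_one]
  ring

theorem wnorm_nonneg (hν : 0 ≤ ν) (a : ℕ → ℝ) : 0 ≤ wnorm ν a := by
  have : 0 ≤ ∑' k : ℕ, |a (k + 1)| * ν ^ (k + 1) :=
    tsum_nonneg fun k => mul_nonneg (abs_nonneg _) (pow_nonneg hν _)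
  unfold wnorm
  positivity

theorem wnorm_const_mul (t : ℝ) (a : ℕ → ℝ) : wnorm ν (fun k => t * a k) = |t| * wnorm ν a := by
  simp only [wnorm, abs_mul, mul_assoc, tsum_mul_left]
  ring

theorem abs_le_wnorm (hν : 1 ≤ ν) (ha : memL1 ν a) (m : ℕ) : |a m| ≤ wnorm ν a := by
  calc |a m| ≤ |a m| * ν ^ m := le_mul_of_one_le_right (abs_nonneg _) (one_le_pow₀ hν)
    _ = normTerm ν a m := by simp [normTerm]
    _ ≤ ∑' j : ℤ, normTerm ν a j := (memL1_iff_summable_normTerm.mp ha).le_tsum _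
          fun j _ => normTerm_nonneg (by linarith) a j
    _ = wnorm ν a := (wnorm_eq_tsum_normTerm ha).symm

theorem normTerm_add_le (hν : 0 ≤ ν) (a b : ℕ → ℝ) (j : ℤ) :
    normTerm ν (a + b) j ≤ normTerm ν a j + normTerm ν b j := by
  simp only [normTerm, Pi.add_apply, ← add_mul]
  exact mul_le_mul_of_nonneg_right (abs_add_le _ _) (pow_nonneg hν _)

theorem memL1.add (hν : 0 ≤ ν) (ha : memL1 ν a) (hb : memL1 ν b) : memL1 ν (a + b) := by
  rw [memL1_iff_summable_normTerm] at *
  exact .of_nonneg_of_le (normTerm_nonneg hν _) (normTerm_add_le hν a b) (ha.add hb)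

theorem memL1.neg (ha : memL1 ν a) : memL1 ν (-a) := by
  simpa [memL1] using ha

theorem memL1.sub (hν : 0 ≤ ν) (ha : memL1 ν a) (hb : memL1 ν b) : memL1 ν (a - b) := by
  simpa only [sub_eq_add_neg] using ha.add hν hb.neg

theorem wnorm_add_le (hν : 0 ≤ ν) (ha : memL1 ν a) (hb : memL1 ν b) :
    wnorm ν (a + b) ≤ wnorm ν a + wnorm ν b := by
  have hab := ha.add hν hb
  rw [wnorm_eq_tsum_normTerm ha, wnorm_eq_tsum_normTerm hb, wnorm_eq_tsum_normTerm hab]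
  rw [memL1_iff_summable_normTerm] at ha hb hab
  rw [← ha.tsum_add hb]
  exact hab.tsum_le_tsum (normTerm_add_le hν a b) (ha.add hb)

theorem wnorm_add_le_wnorm_sub (hν : 0 ≤ ν) (ha : memL1 ν a) (hb : memL1 ν b) :
    wnorm ν (a + b) ≤ wnorm ν (a - b) + 2 * wnorm ν b := by
  have hab := ha.sub hν hb
  calc wnorm ν (a + b) = wnorm ν (a - b + b + b) := by congr 1; abel
    _ ≤ wnorm ν (a - b) + wnorm ν b + wnorm ν b := by
        grw [wnorm_add_le hν (hab.add hν hb) hb, wnorm_add_le hν hab hb]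
    _ = wnorm ν (a - b) + 2 * wnorm ν b := by ring

theorem conv_natAbs (a b : ℕ → ℝ) (k : ℤ) :
    conv a b k.natAbs = ∑' j : ℤ, a j.natAbs * b (k - j).natAbs := by
  obtain ⟨n, rfl | rfl⟩ := Int.eq_nat_or_neg k
  · rfl
  · rw [← (Equiv.neg ℤ).tsum_eq]
    simp only [conv, Int.natAbs_neg, Int.natAbs_natCast, Equiv.neg_apply]
    congr! 3
    rw [← Int.natAbs_neg]
    ring_nf

theorem conv_comm (a b : ℕ → ℝ) : conv a b = conv b a := by
  funext k
  rw [conv, ← (Equiv.subLeft (k : ℤ)).tsum_eq]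
  simp only [conv, Equiv.subLeft_apply, sub_sub_cancel, mul_comm]

theorem summable_abs_conv_summand (hν : 1 ≤ ν) (ha : memL1 ν a) (hb : memL1 ν b) (k : ℤ) :
    Summable fun j : ℤ => |a j.natAbs * b (k - j).natAbs| := by
  refine .of_nonneg_of_le (fun j => abs_nonneg _) (fun j => ?_)
    ((memL1_iff_summable_normTerm.mp ha).mul_right (wnorm ν b))
  rw [abs_mul]
  exact mul_le_mul (le_mul_of_one_le_right (abs_nonneg _) (one_le_pow₀ hν))
    (abs_le_wnorm hν hb _) (abs_nonneg _) (normTerm_nonneg (by linarith) a j)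

theorem conv_sub_add (hν : 1 ≤ ν) (hc : memL1 ν c) (ha : memL1 ν a) :
    conv (c - a) (c + a) = conv c c - conv a a := by
  funext k
  have hs : ∀ {x y : ℕ → ℝ}, memL1 ν x → memL1 ν y →
      Summable fun j : ℤ => x j.natAbs * y ((k : ℤ) - j).natAbs :=
    fun hx hy => (summable_abs_conv_summand hν hx hy k).of_abs
  have hca : conv c a k = conv a c k := by rw [conv_comm]
  simp only [conv, Pi.sub_apply, Pi.add_apply, sub_mul, mul_add] at hca ⊢
  rw [((hs hc hc).sub (hs ha hc)).tsum_add ((hs hc ha).sub (hs ha ha)),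
    (hs hc hc).tsum_sub (hs ha hc), (hs hc ha).tsum_sub (hs ha ha), hca]
  ring

theorem normTerm_conv_le (hν : 1 ≤ ν) (ha : memL1 ν a) (hb : memL1 ν b) (k : ℤ) :
    normTerm ν (conv a b) k ≤ ∑' j : ℤ, normTerm ν a j * normTerm ν b (k - j) := by
  have habs := summable_abs_conv_summand hν ha hb k
  have hprod : Summable fun j : ℤ => normTerm ν a j * normTerm ν b (k - j) :=
    (hasSum_prod_mul_sub (memL1_iff_summable_normTerm.mp ha)
      (memL1_iff_summable_normTerm.mp hb)).summable.prod_factor k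
  calc normTerm ν (conv a b) k
      = |∑' j : ℤ, a j.natAbs * b (k - j).natAbs| * ν ^ k.natAbs := by
        rw [normTerm, conv_natAbs]
    _ ≤ (∑' j : ℤ, |a j.natAbs * b (k - j).natAbs|) * ν ^ k.natAbs := by
        gcongr
        simpa only [Real.norm_eq_abs] using
          norm_tsum_le_tsum_norm (f := fun j : ℤ => a j.natAbs * b (k - j).natAbs) habs
    _ = ∑' j : ℤ, |a j.natAbs * b (k - j).natAbs| * ν ^ k.natAbs := tsum_mul_right.symm
    _ ≤ ∑' j : ℤ, normTerm ν a j * normTerm ν b (k - j) := by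
        refine (habs.mul_right _).tsum_le_tsum (fun j => ?_) hprod
        -- the weight is submultiplicative because `|k| ≤ |j| + |k - j|` and `ν ≥ 1`
        calc |a j.natAbs * b (k - j).natAbs| * ν ^ k.natAbs
            ≤ |a j.natAbs * b (k - j).natAbs| * ν ^ (j.natAbs + (k - j).natAbs) := by
              gcongr
              omega
          _ = normTerm ν a j * normTerm ν b (k - j) := by
              rw [normTerm, normTerm, abs_mul, pow_add]; ring

theorem memL1_conv (hν : 1 ≤ ν) (ha : memL1 ν a) (hb : memL1 ν b) : memL1 ν (conv a b) :=
  memL1_iff_summable_normTerm.mpr <| .of_nonneg_of_le (normTerm_nonneg (by linarith) _)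
    (normTerm_conv_le hν ha hb) (hasSum_tsum_mul_sub (memL1_iff_summable_normTerm.mp ha)
      (memL1_iff_summable_normTerm.mp hb)).summable

theorem wnorm_conv_le (hν : 1 ≤ ν) (ha : memL1 ν a) (hb : memL1 ν b) :
    wnorm ν (conv a b) ≤ wnorm ν a * wnorm ν b := by
  have hsum := hasSum_tsum_mul_sub (memL1_iff_summable_normTerm.mp ha)
    (memL1_iff_summable_normTerm.mp hb)
  rw [wnorm_eq_tsum_normTerm ha, wnorm_eq_tsum_normTerm hb, wnorm_eq_tsum_normTerm
    (memL1_conv hν ha hb), ← hsum.tsum_eq]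
  exact (memL1_iff_summable_normTerm.mp (memL1_conv hν ha hb)).tsum_le_tsum
    (normTerm_conv_le hν ha hb) hsum.summable

end

theorem CR_Z2_bound_general (ν : ℝ) (hν : 1 ≤ ν) (lam r : ℝ) (hr : 0 ≤ r)
    (abar1 c1 : ℕ → ℝ)
    (habar1 : memL1 ν abar1)
    (hc1 : memL1 ν c1)
    (hdist1 : wnorm ν (c1 - abar1) ≤ r) :
    (∀ h1 h2 : ℕ → ℝ, memL1 ν h1 → memL1 ν h2 →
      wnorm ν (fun k =>
          -3 * lam * conv (fun j => conv c1 c1 j - conv abar1 abar1 j) h1 k)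
        ≤ 3 * |lam| * r * (r + 2 * wnorm ν abar1) * max (wnorm ν h1) (wnorm ν h2)) ∧
    (r ≤ 1 →
      3 * |lam| * r * (r + 2 * wnorm ν abar1)
        ≤ (3 * |lam| * (1 + 2 * wnorm ν abar1)) * r) := by
  have hν0 : 0 ≤ ν := by linarith
  refine ⟨fun h1 h2 hh1 _ => ?_, fun hr1 => by
    nlinarith [mul_nonneg (mul_nonneg (abs_nonneg lam) hr) (sub_nonneg.2 hr1)]⟩
  have hfac : (fun j => conv c1 c1 j - conv abar1 abar1 j) = conv (c1 - abar1) (c1 + abar1) :=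
    (conv_sub_add hν hc1 habar1).symm
  rw [hfac]
  have hsum : wnorm ν (c1 + abar1) ≤ r + 2 * wnorm ν abar1 := by
    linarith [wnorm_add_le_wnorm_sub hν0 hc1 habar1]
  have hdiff : wnorm ν (conv (c1 - abar1) (c1 + abar1)) ≤ r * (r + 2 * wnorm ν abar1) :=
    (wnorm_conv_le hν (hc1.sub hν0 habar1) (hc1.add hν0 habar1)).trans
      (mul_le_mul hdist1 hsum (wnorm_nonneg hν0 _) hr)
  calc wnorm ν (fun k => -3 * lam * conv (conv (c1 - abar1) (c1 + abar1)) h1 k)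
      = 3 * |lam| * wnorm ν (conv (conv (c1 - abar1) (c1 + abar1)) h1) := by
        rw [wnorm_const_mul, abs_mul]
        norm_num
    _ ≤ 3 * |lam| * (r * (r + 2 * wnorm ν abar1) * wnorm ν h1) := by
        grw [wnorm_conv_le hν (memL1_conv hν (hc1.sub hν0 habar1) (hc1.add hν0 habar1)) hh1,
          hdiff]
        exact wnorm_nonneg hν0 h1
    _ ≤ 3 * |lam| * r * (r + 2 * wnorm ν abar1) * max (wnorm ν h1) (wnorm ν h2) := by
        rw [mul_assoc (3 * |lam|) r, ← mul_assoc (3 * |lam|)]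
        have hbar := wnorm_nonneg hν0 abar1
        gcongr
        exact le_max_left _ _

/-- The Lipschitz (Z₂) bound for the cubic Cauchy–Riemann nonlinearity: for
`c ∈ B_r(ā)`, the difference of derivatives, acting by
`([DF(c)−DF(ā)]h)_k = −3λ((c₁∗c₁ − ā₁∗ā₁)∗h₁)_k` on the first component and `0` on the
second, satisfies `‖[DF(c)−DF(ā)]h‖ ≤ 3|λ| r (r + 2‖ā₁‖) ‖h‖`; in particular for `r ≤ 1`
the bound `Z₂ = 3|λ|(1 + 2‖ā₁‖)` (times `r`) is valid. -/
theorem CR_Z2_bound (ν : ℝ) (hν : 1 ≤ ν) (lam r : ℝ) (hr : 0 ≤ r)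
    (abar1 abar2 c1 c2 : ℕ → ℝ)
    (habar1 : memL1 ν abar1) (habar2 : memL1 ν abar2)
    (hc1 : memL1 ν c1) (hc2 : memL1 ν c2)
    (hdist1 : wnorm ν (c1 - abar1) ≤ r) (hdist2 : wnorm ν (c2 - abar2) ≤ r) :
    (∀ h1 h2 : ℕ → ℝ, memL1 ν h1 → memL1 ν h2 →
      wnorm ν (fun k =>
          -3 * lam * conv (fun j => conv c1 c1 j - conv abar1 abar1 j) h1 k)
        ≤ 3 * |lam| * r * (r + 2 * wnorm ν abar1) * max (wnorm ν h1) (wnorm ν h2)) ∧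
    (r ≤ 1 →
      3 * |lam| * r * (r + 2 * wnorm ν abar1)
        ≤ (3 * |lam| * (1 + 2 * wnorm ν abar1)) * r) :=
  CR_Z2_bound_general ν hν lam r hr abar1 c1 habar1 hc1 hdist1
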